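/- arXiv:1801.07877 — 2 statements merged into one kernel-verified Lean document; each statement's English description precedes it below -/
import Mathlib

section
/- Let μ*(K→) = [1−ρ0(1−D_p)]·∇_th / ([1−ρ0(1−D_p)]·∇_GA + (ρ1−ρ0)·(∇_th−∇_GA)), where ∇_GA = ρ0·D_p·∇_max/(1−ρ1+ρ0·D_p) and ∇_max = (ρ1−ρ0)/(1−ρ0). If 0 ≤ ρ0 < ρ1 < 1, 0 < D_p ≤ 1, and 0 < ∇_th ≤ ∇_GA, then 0 < μ*(K→) ≤ 1. -/
theorem stmt6 (ρ0 ρ1 Dp th : ℝ) (h0 : 0 < ρ0) (h1 : ρ0 < ρ1) (h2 : ρ1 < 1)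
    (h3 : 0 < Dp) (h4 : Dp ≤ 1) (hth0 : 0 < th)
    (hthGA : th ≤ ρ0 * Dp * ((ρ1 - ρ0) / (1 - ρ0)) / (1 - ρ1 + ρ0 * Dp)) :
    0 < (1 - ρ0 * (1 - Dp)) * th /
        ((1 - ρ0 * (1 - Dp)) * (ρ0 * Dp * ((ρ1 - ρ0) / (1 - ρ0)) / (1 - ρ1 + ρ0 * Dp)) +
          (ρ1 - ρ0) * (th - ρ0 * Dp * ((ρ1 - ρ0) / (1 - ρ0)) / (1 - ρ1 + ρ0 * Dp))) ∧
    (1 - ρ0 * (1 - Dp)) * th /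
        ((1 - ρ0 * (1 - Dp)) * (ρ0 * Dp * ((ρ1 - ρ0) / (1 - ρ0)) / (1 - ρ1 + ρ0 * Dp)) +
          (ρ1 - ρ0) * (th - ρ0 * Dp * ((ρ1 - ρ0) / (1 - ρ0)) / (1 - ρ1 + ρ0 * Dp))) ≤ 1 := by
  set g : ℝ := ρ0 * Dp * ((ρ1 - ρ0) / (1 - ρ0)) / (1 - ρ1 + ρ0 * Dp) with hg
  set A : ℝ := 1 - ρ0 * (1 - Dp) with hA
  have hApos : 0 < A := by nlinarith
  have hAge : ρ1 - ρ0 < A := by nlinarith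
  have hD : A * g + (ρ1 - ρ0) * (th - g) = A * th + (A - (ρ1 - ρ0)) * (g - th) := by ring
  have hDpos : 0 < A * g + (ρ1 - ρ0) * (th - g) := by
    rw [hD]
    have : 0 ≤ (A - (ρ1 - ρ0)) * (g - th) := by
      apply mul_nonneg <;> linarith
    nlinarith
  constructor
  · apply div_pos _ hDpos
    positivity
  · rw [div_le_one hDpos, hD]
    nlinarith
end

section
/- Let μ*(0) = (∇_th − ∇_GA) / (∇_max − ∇_GA + (∇_max − ∇_th)·((ρ1−ρ0)·D_p + ρ1·υs)/(1 − ρ1 + ρ0·D_p)). If 0 ≤ ρ0 < ρ1 < 1, 0 < D_p ≤ 1, υs ≥ 0, and ∇_GA < ∇_th < ∇_max, then 0 < μ*(0) < 1. -/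
theorem stmt8 (ρ0 ρ1 Dp υs th : ℝ) (h0 : 0 ≤ ρ0) (h1 : ρ0 < ρ1) (h2 : ρ1 < 1)
    (h3 : 0 < Dp) (h4 : Dp ≤ 1) (h5 : 0 ≤ υs)
    (hGA : ρ0 * Dp * ((ρ1 - ρ0) / (1 - ρ0)) / (1 - ρ1 + ρ0 * Dp) < th)
    (hmax : th < (ρ1 - ρ0) / (1 - ρ0)) :
    0 < (th - ρ0 * Dp * ((ρ1 - ρ0) / (1 - ρ0)) / (1 - ρ1 + ρ0 * Dp)) /
        ((ρ1 - ρ0) / (1 - ρ0) - ρ0 * Dp * ((ρ1 - ρ0) / (1 - ρ0)) / (1 - ρ1 + ρ0 * Dp) +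
          ((ρ1 - ρ0) / (1 - ρ0) - th) * (((ρ1 - ρ0) * Dp + ρ1 * υs) / (1 - ρ1 + ρ0 * Dp))) ∧
    (th - ρ0 * Dp * ((ρ1 - ρ0) / (1 - ρ0)) / (1 - ρ1 + ρ0 * Dp)) /
        ((ρ1 - ρ0) / (1 - ρ0) - ρ0 * Dp * ((ρ1 - ρ0) / (1 - ρ0)) / (1 - ρ1 + ρ0 * Dp) +
          ((ρ1 - ρ0) / (1 - ρ0) - th) * (((ρ1 - ρ0) * Dp + ρ1 * υs) / (1 - ρ1 + ρ0 * Dp))) < 1 := by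
  set M := (ρ1 - ρ0) / (1 - ρ0) with hM
  set A := ρ0 * Dp * M / (1 - ρ1 + ρ0 * Dp) with hA
  set K := ((ρ1 - ρ0) * Dp + ρ1 * υs) / (1 - ρ1 + ρ0 * Dp) with hK
  have hden : 0 < 1 - ρ1 + ρ0 * Dp := by nlinarith
  have hKpos : 0 ≤ K := by
    apply div_nonneg _ hden.le
    nlinarith
  have hN : 0 < th - A := sub_pos.mpr hGA
  have hMA : th - A < M - A := by linarith
  have hD : M - A + (M - th) * K ≥ M - A := by nlinarith
  have hDpos : 0 < M - A + (M - th) * K := by linarith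
  constructor
  · exact div_pos hN hDpos
  · rw [div_lt_one hDpos]; linarith
end
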